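/- arXiv:2006.14424 — 2 statements merged into one kernel-verified Lean document; each statement's English description precedes it below -/
import Mathlib

section
/- Let m_A, m_B, m_C, m_D be real numbers with m_C ≠ m_D, and suppose Δ = 4(m_A m_C − m_B m_D)² + (m_A m_B (m_C−m_D) + m_C m_D (m_A−m_B) − (m_A−m_B) − (m_C−m_D))² = 0. Then either (m_A = m_D and m_B = m_C) or (m_A m_C = −1 and m_B m_D = −1). -/
theorem stmt_6 (mA mB mC mD : ℝ) (hCD : mC ≠ mD)
    (hΔ : 4*(mA*mC - mB*mD)^2
        + (mA*mB*(mC-mD) + mC*mD*(mA-mB) - (mA-mB) - (mC-mD))^2 = 0) :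
    (mA = mD ∧ mB = mC) ∨ (mA*mC = -1 ∧ mB*mD = -1) := by
  have s1 := sq_nonneg (mA*mC - mB*mD)
  have s2 := sq_nonneg (mA*mB*(mC-mD) + mC*mD*(mA-mB) - (mA-mB) - (mC-mD))
  have ha : mA*mC - mB*mD = 0 := by nlinarith
  have hb : mA*mB*(mC-mD) + mC*mD*(mA-mB) - (mA-mB) - (mC-mD) = 0 := by nlinarith
  by_cases hp : mA*mC = -1
  · exact Or.inr ⟨hp, by linarith⟩
  · left
    have hw : mC - mD ≠ 0 := sub_ne_zero.mpr hCD
    have hp' : 1 + mA*mC ≠ 0 := fun h => hp (by linarith)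
    have key : (mC - mD) * (mC * (mA - mD)) * (1 + mA*mC) = 0 := by
      linear_combination mC*mD*hb + mC*(1 + mA*mC - mA*mD - mC*mD)*ha
    have hs : mC * (mA - mD) = 0 := by
      rcases mul_eq_zero.mp key with h | h
      · rcases mul_eq_zero.mp h with h | h
        · exact absurd h hw
        · exact h
      · exact absurd h hp'
    have hs2 : mD * (mB - mC) = 0 := by linear_combination -ha + hs
    rcases mul_eq_zero.mp hs with hc0 | hu
    · -- mC = 0
      have hd0 : mD ≠ 0 := fun h => hCD (by rw [hc0, h])
      have hv : mB - mC = 0 := by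
        rcases mul_eq_zero.mp hs2 with h | h
        · exact absurd h hd0
        · exact h
      have hB : mB = mC := by linarith
      refine ⟨?_, hB⟩
      subst hc0
      have hB0 : mB = 0 := hB
      subst hB0
      linear_combination -hb
    · have hA : mA = mD := by linarith
      rcases mul_eq_zero.mp hs2 with hd0 | hv
      · -- mD = 0
        refine ⟨hA, ?_⟩
        subst hd0
        have hA0 : mA = 0 := hA
        subst hA0
        linear_combination hb
      · exact ⟨hA, by linarith⟩
end

section
/- Let k be a field, m_A, m_B, m_C, m_D ∈ k with m_C ≠ m_D. Suppose that (i) m_A = m_D or m_A m_C = −1, (ii) m_B = m_C or m_B m_D = −1, and (iii) (m_B−m_D)(m_A m_C+1) = −(m_A−m_C)(m_B m_D+1). Then either (m_A = m_D and m_B = m_C), or (m_A m_C = −1 and m_B m_D = −1), or (m_A² = −1 and m_A = m_B and (m_A = m_C or m_A = m_D)). -/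
theorem stmt_17 (k : Type*) [Field k] (mA mB mC mD : k) (hCD : mC ≠ mD)
    (h1 : mA = mD ∨ mA*mC = -1)
    (h2 : mB = mC ∨ mB*mD = -1)
    (h3 : (mB-mD)*(mA*mC+1) = -((mA-mC)*(mB*mD+1))) :
    (mA = mD ∧ mB = mC) ∨ (mA*mC = -1 ∧ mB*mD = -1) ∨
      (mA^2 = -1 ∧ mA = mB ∧ (mA = mC ∨ mA = mD)) := by
  rcases h1 with h1 | h1 <;> rcases h2 with h2 | h2
  · exact Or.inl ⟨h1, h2⟩
  · -- mA = mD, mB*mD = -1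
    have h3' : (mB - mD) * (mA * mC + 1) = 0 := by rw [h3, h2]; ring
    rcases mul_eq_zero.mp h3' with h | h
    · have hBD : mB = mD := by linear_combination h
      have hA2 : mA^2 = -1 := by
        rw [h1]; linear_combination h2 - mD * hBD
      exact Or.inr (Or.inr ⟨hA2, h1.trans hBD.symm, Or.inr h1⟩)
    · have : mA * mC = -1 := by linear_combination h
      exact Or.inr (Or.inl ⟨this, h2⟩)
  · -- mA*mC = -1, mB = mC
    have h3' : (mA - mC) * (mB * mD + 1) = 0 := by
      have : (mB - mD) * (mA * mC + 1) = 0 := by rw [h1]; ring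
      linear_combination h3 - this
    rcases mul_eq_zero.mp h3' with h | h
    · have hAC : mA = mC := by linear_combination h
      have hA2 : mA^2 = -1 := by rw [pow_two]; nth_rw 2 [hAC]; exact h1
      exact Or.inr (Or.inr ⟨hA2, hAC.trans h2.symm, Or.inl hAC⟩)
    · have : mB * mD = -1 := by linear_combination h
      exact Or.inr (Or.inl ⟨h1, this⟩)
  · exact Or.inr (Or.inl ⟨h1, h2⟩)
end
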